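/- Let G be a finite directed graph such that for every vertex the set of valid next hops V(i) is a subset of its neighbors satisfying: for all n ∈ V(i), d(n) < fd(i) or (d(n) = fd(i) and |n| < |i|), and fd(i) ≤ d(i) for all i. Then the valid next-hop graph has no cycle, and along any valid next-hop path the sequence (d(·), |·|) is strictly lexicographically decreasing. -/
import Mathlib


/-- If each valid next hop n of i satisfies d n < fd i or (d n = fd i and
name n < name i), and fd i ≤ d i, then the valid next-hop graph is acyclic and
along any valid next-hop path the sequence (d ·, name ·) strictly
lexicographically decreases. -/
theorem stmt_15 {V : Type*} [Fintype V] (d fd : V → ℕ) (name : V → ℕ)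
    (hinj : Function.Injective name)
    (hfd : ∀ i, fd i ≤ d i)
    (nexthop : V → Set V)
    (hN : ∀ i n, n ∈ nexthop i →
      d n < fd i ∨ (d n = fd i ∧ name n < name i)) :
    (∀ v : V, ¬ Relation.TransGen (fun i n => n ∈ nexthop i) v v) ∧
    (∀ (k : ℕ) (w : ℕ → V), (∀ m < k, w (m + 1) ∈ nexthop (w m)) →
      ∀ i j, i < j → j ≤ k →
        d (w j) < d (w i) ∨ (d (w j) = d (w i) ∧ name (w j) < name (w i))) := by
  have step : ∀ i n, n ∈ nexthop i →
      d n < d i ∨ (d n = d i ∧ name n < name i) := by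
    intro i n hn
    rcases hN i n hn with h | ⟨h1, h2⟩
    · exact Or.inl (lt_of_lt_of_le h (hfd i))
    · rcases lt_or_eq_of_le ((le_of_eq h1).trans (hfd i)) with h' | h'
      · exact Or.inl h'
      · exact Or.inr ⟨h', h2⟩
  have trans : ∀ a b, Relation.TransGen (fun i n => n ∈ nexthop i) a b →
      d b < d a ∨ (d b = d a ∧ name b < name a) := by
    intro a b h
    induction h with
    | single h => exact step _ _ h
    | tail _ h ih =>
      rcases ih with ih | ⟨ih1, ih2⟩
      · rcases step _ _ h with h' | ⟨h1, _⟩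
        · exact Or.inl (h'.trans ih)
        · exact Or.inl (h1 ▸ ih)
      · rcases step _ _ h with h' | ⟨h1, h2⟩
        · exact Or.inl (ih1 ▸ h')
        · exact Or.inr ⟨h1.trans ih1, h2.trans ih2⟩
  constructor
  · intro v hv
    rcases trans v v hv with h | ⟨_, h⟩
    · exact lt_irrefl _ h
    · exact lt_irrefl _ h
  · intro k w hw i j hij hjk
    apply trans
    induction j with
    | zero => omega
    | succ j ih =>
      have hj : w (j + 1) ∈ nexthop (w j) := hw j (by omega)
      rcases Nat.lt_or_ge i j with h | h
      · exact (ih h (by omega)).tail hj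
      · have : i = j := by omega
        subst this
        exact Relation.TransGen.single hj
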